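/- arXiv:2507.03139 — 5 statements merged into one kernel-verified Lean document; each statement's English description precedes it below -/
import Mathlib

section
/- Let R be a commutative Noetherian ring and M a finitely generated R-module. Then the natural map from M to the inverse limit over all prime ideals p of Spec R (ordered by specialization, i.e. inclusion of primes, with transition maps the localization maps M_p → M_q for q ⊆ p) of the localizations M_p is an isomorphism of R-modules. -/
open LocalizedModule

variable {R : Type*} [CommRing R]

/-- The canonical localization map `M_p → M_q` for primes `q ⊆ p`. -/
noncomputable def specMap (M : Type*) [AddCommGroup M] [Module R M]
    (p q : PrimeSpectrum R) (h : q.asIdeal ≤ p.asIdeal) :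
    LocalizedModule p.asIdeal.primeCompl M →ₗ[R] LocalizedModule q.asIdeal.primeCompl M :=
  LocalizedModule.lift _ (mkLinearMap q.asIdeal.primeCompl M)
    (fun x => IsLocalizedModule.map_units (mkLinearMap q.asIdeal.primeCompl M)
      (⟨x.1, fun hx => x.2 (h hx)⟩ : q.asIdeal.primeCompl))

/-- A family of germs `(σ_p ∈ M_p)_p` is compatible with localization if the
localization maps `M_p → M_q` (for `q ⊆ p`) carry `σ_p` to `σ_q`. -/
def IsCompatible (M : Type*) [AddCommGroup M] [Module R M]
    (σ : ∀ p : PrimeSpectrum R, LocalizedModule p.asIdeal.primeCompl M) : Prop :=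
  ∀ (p q : PrimeSpectrum R) (h : q.asIdeal ≤ p.asIdeal), specMap M p q h (σ p) = σ q

lemma specMap_mk (M : Type*) [AddCommGroup M] [Module R M]
    (p q : PrimeSpectrum R) (h : q.asIdeal ≤ p.asIdeal) (m : M) :
    specMap M p q h (mkLinearMap p.asIdeal.primeCompl M m)
      = mkLinearMap q.asIdeal.primeCompl M m := by
  exact LinearMap.congr_fun (LocalizedModule.lift_comp p.asIdeal.primeCompl
    (mkLinearMap q.asIdeal.primeCompl M)
    (fun x => IsLocalizedModule.map_units (mkLinearMap q.asIdeal.primeCompl M)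
      (⟨x.1, fun hx => x.2 (h hx)⟩ : q.asIdeal.primeCompl))) m

/-- The submodule of `∏_p M_p` consisting of families compatible with localization,
i.e. the inverse limit `lim_{p ∈ Spec R} M_p` over the specialization order. -/
noncomputable def compatibleFamilies (M : Type*) [AddCommGroup M] [Module R M] :
    Submodule R (∀ p : PrimeSpectrum R, LocalizedModule p.asIdeal.primeCompl M) where
  carrier := {σ | IsCompatible M σ}
  add_mem' {a b} ha hb p q h := by simp [map_add, ha p q h, hb p q h]
  zero_mem' p q h := by simp
  smul_mem' r a ha p q h := by simp [map_smul, ha p q h]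

/-- The natural `R`-linear map `M → lim_{p ∈ Spec R} M_p` sending `m` to the
compatible family of its germs `m/1`. -/
noncomputable def toCompatibleFamilies (M : Type*) [AddCommGroup M] [Module R M] :
    M →ₗ[R] compatibleFamilies (R := R) M :=
  (LinearMap.pi (fun p : PrimeSpectrum R => mkLinearMap p.asIdeal.primeCompl M)).codRestrict
    (compatibleFamilies M) (fun m p q h => specMap_mk M p q h m)

/-- **Key Lemma.** For a commutative Noetherian ring `R` and a finitely generated
`R`-module `M`, the natural map `M → lim_{p ∈ Spec R} M_p` (the inverse limit over
the specialization order, realized as the submodule of compatible families in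
`∏_p M_p`) is an isomorphism of `R`-modules. -/
lemma smul_coe_mk_cancel {M : Type*} [AddCommGroup M] [Module R M] {S : Submonoid R}
    (m : M) (s : S) :
    (s : R) • LocalizedModule.mk m s = LocalizedModule.mk m (1 : S) := by
  rw [LocalizedModule.smul'_mk, ← Submonoid.smul_def, LocalizedModule.mk_cancel]

lemma specMap_mk_gen (M : Type*) [AddCommGroup M] [Module R M]
    (p q : PrimeSpectrum R) (h : q.asIdeal ≤ p.asIdeal) (m : M) (s : p.asIdeal.primeCompl) :
    specMap M p q h (LocalizedModule.mk m s)
      = LocalizedModule.mk m (⟨s.1, fun hx => s.2 (h hx)⟩ : q.asIdeal.primeCompl) := by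
  refine IsLocalizedModule.smul_injective (mkLinearMap q.asIdeal.primeCompl M)
    (⟨s.1, fun hx => s.2 (h hx)⟩ : q.asIdeal.primeCompl) ?_
  have e1 : (⟨s.1, fun hx => s.2 (h hx)⟩ : q.asIdeal.primeCompl) •
      specMap M p q h (LocalizedModule.mk m s)
      = specMap M p q h ((s : R) • LocalizedModule.mk m s) := by
    rw [Submonoid.smul_def, ← map_smul]
  have e2 : (⟨s.1, fun hx => s.2 (h hx)⟩ : q.asIdeal.primeCompl) •
      LocalizedModule.mk m (⟨s.1, fun hx => s.2 (h hx)⟩ : q.asIdeal.primeCompl)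
      = LocalizedModule.mk m (1 : q.asIdeal.primeCompl) := by
    rw [Submonoid.smul_def]; exact smul_coe_mk_cancel m _
  have e3 : specMap M p q h ((s : R) • LocalizedModule.mk m s)
      = LocalizedModule.mk m (1 : q.asIdeal.primeCompl) := by
    rw [smul_coe_mk_cancel]
    have := specMap_mk M p q h m
    rwa [LocalizedModule.mkLinearMap_apply, LocalizedModule.mkLinearMap_apply] at this
  exact (e1.trans e3).trans e2.symm

/-- The localization of a linear map at a prime. -/
noncomputable def locMap {M N : Type*} [AddCommGroup M] [Module R M]
    [AddCommGroup N] [Module R N] (f : M →ₗ[R] N) (p : PrimeSpectrum R) :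
    LocalizedModule p.asIdeal.primeCompl M →ₗ[R] LocalizedModule p.asIdeal.primeCompl N :=
  IsLocalizedModule.map p.asIdeal.primeCompl (mkLinearMap p.asIdeal.primeCompl M)
    (mkLinearMap p.asIdeal.primeCompl N) f

lemma locMap_mk {M N : Type*} [AddCommGroup M] [Module R M]
    [AddCommGroup N] [Module R N] (f : M →ₗ[R] N) (p : PrimeSpectrum R)
    (m : M) (s : p.asIdeal.primeCompl) :
    locMap f p (LocalizedModule.mk m s) = LocalizedModule.mk (f m) s :=
  IsLocalizedModule.map_LocalizedModules p.asIdeal.primeCompl f m s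

lemma specMap_locMap {M N : Type*} [AddCommGroup M] [Module R M]
    [AddCommGroup N] [Module R N] (f : M →ₗ[R] N) (p q : PrimeSpectrum R)
    (h : q.asIdeal ≤ p.asIdeal) (x : LocalizedModule p.asIdeal.primeCompl M) :
    specMap N p q h (locMap f p x) = locMap f q (specMap M p q h x) := by
  induction x using LocalizedModule.induction_on with
  | _ m s => rw [locMap_mk, specMap_mk_gen, specMap_mk_gen, locMap_mk]

/-- Surjectivity onto compatible families. -/
def GermSurj (M : Type*) [AddCommGroup M] [Module R M] : Prop :=
  ∀ σ : (∀ p : PrimeSpectrum R, LocalizedModule p.asIdeal.primeCompl M),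
    IsCompatible M σ → ∃ m : M, ∀ p, σ p = LocalizedModule.mk m 1

lemma germSurj_of_subsingleton (M : Type*) [AddCommGroup M] [Module R M]
    [Subsingleton M] : GermSurj (R := R) M := by
  intro σ _
  refine ⟨0, fun p => ?_⟩
  induction σ p using LocalizedModule.induction_on with
  | _ m s =>
    rw [Subsingleton.elim m 0, LocalizedModule.zero_mk, LocalizedModule.zero_mk]

lemma germSurj_of_exact {M₁ M₂ M₃ : Type*} [AddCommGroup M₁] [Module R M₁]
    [AddCommGroup M₂] [Module R M₂] [AddCommGroup M₃] [Module R M₃]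
    (f : M₁ →ₗ[R] M₂) (g : M₂ →ₗ[R] M₃) (hf : Function.Injective f)
    (hg : Function.Surjective g) (hfg : Function.Exact f g)
    (h1 : GermSurj (R := R) M₁) (h3 : GermSurj (R := R) M₃) : GermSurj (R := R) M₂ := by
  intro σ hσ
  -- push forward to M₃
  have hτ : IsCompatible M₃ (fun p => locMap g p (σ p)) := by
    intro p q h
    rw [specMap_locMap, hσ p q h]
  obtain ⟨m₃, hm₃⟩ := h3 _ hτ
  obtain ⟨m₂, rfl⟩ := hg m₃
  -- the difference family
  set δ : ∀ p : PrimeSpectrum R, LocalizedModule p.asIdeal.primeCompl M₂ :=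
    fun p => σ p - LocalizedModule.mk m₂ 1 with hδ
  have hδc : IsCompatible M₂ δ := by
    intro p q h
    rw [hδ]
    simp only [map_sub, hσ p q h]
    congr 1
    have := specMap_mk M₂ p q h m₂
    rwa [LocalizedModule.mkLinearMap_apply, LocalizedModule.mkLinearMap_apply] at this
  have hδ0 : ∀ p, locMap g p (δ p) = 0 := by
    intro p
    rw [hδ]
    simp only [map_sub, hm₃ p, locMap_mk]
    exact sub_self _
  -- pull back to M₁
  have hex : ∀ p : PrimeSpectrum R, ∃ y, locMap f p y = δ p := by
    intro p
    have := IsLocalizedModule.map_exact p.asIdeal.primeCompl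
      (mkLinearMap p.asIdeal.primeCompl M₁) (mkLinearMap p.asIdeal.primeCompl M₂)
      (mkLinearMap p.asIdeal.primeCompl M₃) f g hfg
    exact (this (δ p)).mp (hδ0 p)
  choose ε hε using hex
  have hεc : IsCompatible M₁ ε := by
    intro p q h
    apply IsLocalizedModule.map_injective q.asIdeal.primeCompl
      (mkLinearMap q.asIdeal.primeCompl M₁) (mkLinearMap q.asIdeal.primeCompl M₂) f hf
    show locMap f q _ = locMap f q _
    rw [hε q, ← specMap_locMap, hε p, hδc p q h]
  obtain ⟨m₁, hm₁⟩ := h1 ε hεc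
  refine ⟨m₂ + f m₁, fun p => ?_⟩
  have h4 : δ p = LocalizedModule.mk (f m₁) 1 := by
    rw [← hε p, hm₁ p, locMap_mk]
  have h5 : σ p = LocalizedModule.mk m₂ 1 + δ p := by
    show σ p = LocalizedModule.mk m₂ 1 + (σ p - LocalizedModule.mk m₂ 1); abel
  rw [h5, h4, LocalizedModule.mk_add_mk]
  simp

lemma GermSurj.congr {M₁ M₂ : Type*} [AddCommGroup M₁] [Module R M₁]
    [AddCommGroup M₂] [Module R M₂] (e : M₁ ≃ₗ[R] M₂)
    (h : GermSurj (R := R) M₁) : GermSurj (R := R) M₂ := by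
  refine germSurj_of_exact e.toLinearMap (0 : M₂ →ₗ[R] PUnit.{1}) e.injective
    (fun u => ⟨0, Subsingleton.elim _ _⟩) (fun y => ?_) h
    (germSurj_of_subsingleton PUnit.{1})
  constructor
  · intro _; exact ⟨e.symm y, by simp⟩
  · intro _; exact Subsingleton.elim _ _

section Base

variable (p : Ideal R) (hp : p.IsPrime)

lemma smul_quot_zero {s : R} (hs : s ∈ p) (m : R ⧸ p) : s • m = 0 := by
  obtain ⟨r, rfl⟩ := Submodule.Quotient.mk_surjective p m
  rw [← Submodule.Quotient.mk_smul, Submodule.Quotient.mk_eq_zero]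
  exact p.mul_mem_right r hs

lemma quot_smul_eq_zero_of_notMem (hp : p.IsPrime) {u : R} (hu : u ∉ p) (m : R ⧸ p)
    (h : u • m = 0) : m = 0 := by
  obtain ⟨r, rfl⟩ := Submodule.Quotient.mk_surjective p m
  rw [← Submodule.Quotient.mk_smul, Submodule.Quotient.mk_eq_zero] at h
  rw [Submodule.Quotient.mk_eq_zero]
  rcases hp.mem_or_mem h with h' | h'
  · exact absurd h' hu
  · exact h'

lemma loc_quot_eq_zero {q : PrimeSpectrum R} (hq : ¬ p ≤ q.asIdeal)
    (x : LocalizedModule q.asIdeal.primeCompl (R ⧸ p)) : x = 0 := by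
  obtain ⟨s, hsp, hsq⟩ := SetLike.not_le_iff_exists.mp hq
  induction x using LocalizedModule.induction_on with
  | _ m t =>
    rw [← LocalizedModule.zero_mk (1 : q.asIdeal.primeCompl), LocalizedModule.mk_eq]
    refine ⟨⟨s, hsq⟩, ?_⟩
    simp [Submonoid.smul_def, smul_quot_zero p hsp]

lemma specMap_quot_injective {q : PrimeSpectrum R} (hp : p.IsPrime)
    (h : p ≤ q.asIdeal)
    (x : LocalizedModule q.asIdeal.primeCompl (R ⧸ p))
    (hx : specMap (R ⧸ p) q ⟨p, hp⟩ h x = 0) : x = 0 := by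
  induction x using LocalizedModule.induction_on with
  | _ m t =>
    rw [specMap_mk_gen, ← LocalizedModule.zero_mk
      (1 : (⟨p, hp⟩ : PrimeSpectrum R).asIdeal.primeCompl), LocalizedModule.mk_eq] at hx
    obtain ⟨u, hu⟩ := hx
    have hu' : (u : R) • m = 0 := by simpa [Submonoid.smul_def] using hu
    have hm : m = 0 := quot_smul_eq_zero_of_notMem p hp u.2 m hu' 
    rw [hm, LocalizedModule.zero_mk]

lemma germSurj_quot_prime (hp : p.IsPrime) : GermSurj (R := R) (R ⧸ p) := by
  intro σ hσ
  set P : PrimeSpectrum R := ⟨p, hp⟩ with hP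
  -- the ideal of denominators
  set I : Ideal R :=
    { carrier := {r : R | ∃ m : R ⧸ p, r • σ P = LocalizedModule.mk m 1}
      add_mem' := by
        rintro a b ⟨ma, hma⟩ ⟨mb, hmb⟩
        refine ⟨ma + mb, ?_⟩
        rw [add_smul, hma, hmb, LocalizedModule.mk_add_mk]
        simp
      zero_mem' := ⟨0, by rw [zero_smul, LocalizedModule.zero_mk]⟩
      smul_mem' := by
        rintro c r ⟨m, hm⟩
        refine ⟨c • m, ?_⟩
        rw [smul_eq_mul, mul_smul, hm, LocalizedModule.smul'_mk] } with hI
  have htop : I = ⊤ := by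
    by_contra hne
    obtain ⟨K, hKmax, hIK⟩ := Ideal.exists_le_maximal I hne
    by_cases hpm : p ≤ K
    · have hcomp := hσ ⟨K, hKmax.isPrime⟩ P hpm
      obtain ⟨m, s, hms⟩ : ∃ m s, σ ⟨K, hKmax.isPrime⟩ = LocalizedModule.mk m s :=
        LocalizedModule.induction_on (fun m s => ⟨m, s, rfl⟩) (σ ⟨K, hKmax.isPrime⟩)
      rw [hms, specMap_mk_gen] at hcomp
      have hsI : (s : R) ∈ I := by
        refine ⟨m, ?_⟩
        rw [← hcomp]
        exact smul_coe_mk_cancel (R := R) m (⟨s.1, fun hx => s.2 (hpm hx)⟩ : P.asIdeal.primeCompl)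
      exact s.2 (hIK hsI)
    · obtain ⟨s, hsp, hsm⟩ := SetLike.not_le_iff_exists.mp hpm
      have hsI : s ∈ I := by
        refine ⟨0, ?_⟩
        obtain ⟨m, t, hmt⟩ : ∃ m t, σ P = LocalizedModule.mk m t :=
          LocalizedModule.induction_on (fun m t => ⟨m, t, rfl⟩) (σ P)
        rw [hmt, LocalizedModule.smul'_mk, smul_quot_zero p hsp, LocalizedModule.zero_mk,
          LocalizedModule.zero_mk]
      exact hsm (hIK hsI)
  have h1I : (1 : R) ∈ I := htop ▸ Submodule.mem_top
  obtain ⟨m, hm⟩ := h1I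
  rw [one_smul] at hm
  refine ⟨m, fun q => ?_⟩
  by_cases hq : p ≤ q.asIdeal
  · have hcomp := hσ q P hq
    have hmk : specMap (R ⧸ p) q P hq (LocalizedModule.mk m 1) = LocalizedModule.mk m 1 := by
      have := specMap_mk (R ⧸ p) q P hq m
      rwa [LocalizedModule.mkLinearMap_apply, LocalizedModule.mkLinearMap_apply] at this
    have : specMap (R ⧸ p) q P hq (σ q - LocalizedModule.mk m 1) = 0 := by
      rw [map_sub, hcomp, hmk, hm, sub_self]
    have := specMap_quot_injective p hp hq _ this
    exact sub_eq_zero.mp this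
  · rw [loc_quot_eq_zero p hq (σ q), loc_quot_eq_zero p hq (LocalizedModule.mk m 1)]

end Base

lemma germSurj_quotient [IsNoetherianRing R] (M : Type*) [AddCommGroup M] [Module R M]
    [Module.Finite R M] (N : Submodule R M) : GermSurj (R := R) (M ⧸ N) := by
  have wf : WellFounded ((· > ·) : Submodule R M → Submodule R M → Prop) :=
    (isNoetherian_of_isNoetherianRing_of_finite R M).wf
  induction N using WellFounded.induction wf with
  | _ N IH =>
    by_cases hN : N = ⊤
    · have : Subsingleton (M ⧸ N) := (Submodule.Quotient.subsingleton_iff (p := N)).mpr hN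
      exact germSurj_of_subsingleton _
    · have hnt : Nontrivial (M ⧸ N) :=
        (Submodule.Quotient.nontrivial_iff (p := N)).mpr hN
      obtain ⟨p, hp⟩ := associatedPrimes.nonempty R (M ⧸ N)
      obtain ⟨hprime, x, hann⟩ := isAssociatedPrime_iff.mp hp
      rw [Submodule.bot_colon'] at hann
      -- x ≠ 0
      have hx0 : x ≠ 0 := by
        rintro rfl
        rw [Submodule.span_singleton_eq_bot.mpr rfl, Submodule.annihilator_bot] at hann
        exact hprime.ne_top hann
      -- the injection R⧸p → M⧸N
      have hle : p ≤ LinearMap.ker (LinearMap.toSpanSingleton R (M ⧸ N) x) := by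
        intro r hr
        rw [LinearMap.mem_ker, LinearMap.toSpanSingleton_apply]
        exact (Submodule.mem_annihilator_span_singleton x r).mp (hann ▸ hr)
      have hge : LinearMap.ker (LinearMap.toSpanSingleton R (M ⧸ N) x) ≤ p := by
        intro r hr
        rw [LinearMap.mem_ker, LinearMap.toSpanSingleton_apply] at hr
        exact hann ▸ (Submodule.mem_annihilator_span_singleton x r).mpr hr
      set f : (R ⧸ p) →ₗ[R] (M ⧸ N) :=
        Submodule.liftQ p (LinearMap.toSpanSingleton R (M ⧸ N) x) hle with hf
      have hfinj : Function.Injective f :=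
        LinearMap.ker_eq_bot.mp (Submodule.ker_liftQ_eq_bot p _ hle hge)
      -- lift x to M
      obtain ⟨y, hy⟩ := Submodule.Quotient.mk_surjective N x
      have hyN : y ∉ N := by
        intro hmem
        exact hx0 (by rw [← hy, Submodule.Quotient.mk_eq_zero]; exact hmem)
      set N' : Submodule R M := N ⊔ Submodule.span R {y} with hN'
      have hlt : N < N' := by
        refine lt_of_le_of_ne le_sup_left (fun e => hyN ?_)
        have : y ∈ N' := Submodule.mem_sup_right (Submodule.subset_span (Set.mem_singleton y))
        rwa [← e] at this
      set g : (M ⧸ N) →ₗ[R] (M ⧸ N') :=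
        Submodule.mapQ N N' LinearMap.id
          (by rw [Submodule.comap_id]; exact le_sup_left) with hg
      have hgsurj : Function.Surjective g := by
        intro z
        obtain ⟨w, rfl⟩ := Submodule.Quotient.mk_surjective N' z
        exact ⟨Submodule.Quotient.mk w, by rw [hg, Submodule.mapQ_apply, LinearMap.id_apply]⟩
      -- range of f is the image of N'
      have hrange : Submodule.map N.mkQ N' = LinearMap.range f := by
        rw [hf, Submodule.range_liftQ, ← LinearMap.span_singleton_eq_range, hN',
          Submodule.map_sup, Submodule.map_span, Set.image_singleton, Submodule.mkQ_apply, hy]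
        have : Submodule.map N.mkQ N = ⊥ := by
          exact Submodule.mkQ_map_self N
        rw [this, bot_sup_eq]
      have hexact : Function.Exact f g := by
        intro z
        obtain ⟨w, rfl⟩ := Submodule.Quotient.mk_surjective N z
        constructor
        · intro h0
          have hw : w ∈ N' := by
            have hgw : g (Submodule.Quotient.mk w) = Submodule.Quotient.mk (p := N') w := by
              rw [hg, Submodule.mapQ_apply, LinearMap.id_apply]
            have : Submodule.Quotient.mk (p := N') w = 0 := by rw [← hgw]; exact h0
            rwa [Submodule.Quotient.mk_eq_zero] at this
          have : N.mkQ w ∈ Submodule.map N.mkQ N' :=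
            Submodule.mem_map_of_mem hw
          rw [hrange] at this
          exact this
        · rintro ⟨r, hr⟩
          have hw : w ∈ N' := by
            have : N.mkQ w ∈ LinearMap.range f := ⟨r, by rwa [Submodule.mkQ_apply]⟩
            rw [← hrange, ← Submodule.mem_comap, Submodule.comap_map_mkQ,
              sup_eq_right.mpr le_sup_left] at this
            exact this
          rw [hg, Submodule.mapQ_apply, LinearMap.id_apply]
          exact (Submodule.Quotient.mk_eq_zero N').mpr hw
      exact germSurj_of_exact f g hfinj hgsurj hexact
        (germSurj_quot_prime p hprime) (IH N' hlt)

theorem germSurj_of_finite [IsNoetherianRing R] (M : Type*) [AddCommGroup M] [Module R M]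
    [Module.Finite R M] : GermSurj (R := R) M :=
  GermSurj.congr (Submodule.quotEquivOfEqBot (⊥ : Submodule R M) rfl)
    (germSurj_quotient M ⊥)

lemma eq_zero_of_localization_mk {M : Type*} [AddCommGroup M] [Module R M] (m : M)
    (hm : ∀ p : PrimeSpectrum R,
      (LocalizedModule.mk m 1 : LocalizedModule p.asIdeal.primeCompl M) = 0) : m = 0 := by
  set J : Ideal R :=
    { carrier := {r : R | r • m = 0}
      add_mem' := by rintro a b ha hb; rw [Set.mem_setOf_eq, add_smul, ha, hb, add_zero]
      zero_mem' := by rw [Set.mem_setOf_eq, zero_smul]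
      smul_mem' := by
        rintro c r hr
        rw [Set.mem_setOf_eq, smul_eq_mul, mul_smul, hr, smul_zero] } with hJ
  have htop : J = ⊤ := by
    by_contra hne
    obtain ⟨K, hKmax, hJK⟩ := Ideal.exists_le_maximal J hne
    have := hm ⟨K, hKmax.isPrime⟩
    rw [← LocalizedModule.zero_mk (1 : (⟨K, hKmax.isPrime⟩ :
      PrimeSpectrum R).asIdeal.primeCompl), LocalizedModule.mk_eq] at this
    obtain ⟨u, hu⟩ := this
    have hu' : (u : R) • m = 0 := by simpa [Submonoid.smul_def] using hu
    exact u.2 (hJK hu')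
  have h1 : (1 : R) ∈ J := htop ▸ Submodule.mem_top
  rw [← one_smul R m]
  exact h1

/-- **Key Lemma.** -/
theorem key_lemma [IsNoetherianRing R] (M : Type*) [AddCommGroup M] [Module R M]
    [Module.Finite R M] :
    Function.Bijective (toCompatibleFamilies (R := R) M) := by
  constructor
  · refine (injective_iff_map_eq_zero _).mpr ?_
    intro m hm
    refine eq_zero_of_localization_mk (R := R) m (fun p => ?_)
    have := congrFun (congrArg Subtype.val hm) p
    rwa [← LocalizedModule.mkLinearMap_apply]
  · rintro ⟨σ, hσ⟩
    obtain ⟨m, hm⟩ := germSurj_of_finite M σ hσ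
    refine ⟨m, ?_⟩
    apply Subtype.ext
    funext p
    show mkLinearMap p.asIdeal.primeCompl M m = σ p
    rw [LocalizedModule.mkLinearMap_apply, hm p]
end

section
/- Let R be a commutative Noetherian ring and M, N finitely generated R-modules. Suppose for each prime p of R we are given an R_p-linear map φ_p : M_p → N_p, compatible with localization: for primes q ⊆ p, the localization of φ_p at q equals φ_q (under the canonical isomorphisms (M_p)_q ≅ M_q). Then there is a unique R-linear map ψ : M → N such that φ_p is the localization of ψ at p for every prime p. -/
open LocalizedModule

variable {R : Type*} [CommRing R]

namespace Glob

variable {N : Type*} [AddCommGroup N] [Module R N]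

lemma mk_eq_zero_iff' {p : PrimeSpectrum R} (n : N) (u : p.asIdeal.primeCompl) :
    (LocalizedModule.mk n u : LocalizedModule p.asIdeal.primeCompl N) = 0 ↔
      ∃ s ∈ p.asIdeal.primeCompl, s • n = 0 := by
  rw [show (0 : LocalizedModule p.asIdeal.primeCompl N) = LocalizedModule.mk (0 : N) 1 from
    (LocalizedModule.zero_mk 1).symm, LocalizedModule.mk_eq]
  constructor
  · rintro ⟨c, hc⟩
    refine ⟨c, c.2, ?_⟩
    simpa [Submonoid.smul_def] using hc
  · rintro ⟨s, hs, h⟩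
    exact ⟨⟨s, hs⟩, by simp [Submonoid.smul_def, h]⟩

lemma localized_smul_cancel {p : PrimeSpectrum R} (s : p.asIdeal.primeCompl)
    {a b : LocalizedModule p.asIdeal.primeCompl N} (h : (s : R) • a = (s : R) • b) : a = b := by
  have hu := IsLocalizedModule.map_units (mkLinearMap p.asIdeal.primeCompl N) s
  rw [Module.End.isUnit_iff] at hu
  exact hu.injective (by simpa [Module.algebraMap_end_apply] using h)

lemma specMap_mk' {p q : PrimeSpectrum R} (h : q.asIdeal ≤ p.asIdeal) (n : N)
    (u : p.asIdeal.primeCompl) :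
    specMap N p q h (LocalizedModule.mk n u)
      = LocalizedModule.mk n (⟨u.1, fun hx => u.2 (h hx)⟩ : q.asIdeal.primeCompl) := by
  apply localized_smul_cancel (⟨u.1, fun hx => u.2 (h hx)⟩ : q.asIdeal.primeCompl)
  rw [← map_smul]
  have h1 : (u : R) • (LocalizedModule.mk n u : LocalizedModule p.asIdeal.primeCompl N)
      = LocalizedModule.mk n 1 := by
    rw [LocalizedModule.smul'_mk, ← Submonoid.smul_def, LocalizedModule.mk_cancel]
  have h2 : ((⟨u.1, fun hx => u.2 (h hx)⟩ : q.asIdeal.primeCompl) : R) •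
      (LocalizedModule.mk n (⟨u.1, fun hx => u.2 (h hx)⟩ : q.asIdeal.primeCompl) :
        LocalizedModule q.asIdeal.primeCompl N) = LocalizedModule.mk n 1 := by
    rw [LocalizedModule.smul'_mk, ← Submonoid.smul_def, LocalizedModule.mk_cancel]
  rw [h1, h2]
  exact specMap_mk N p q h n

end Glob

namespace Glob

variable {R : Type*} [CommRing R]
variable {N : Type*} [AddCommGroup N] [Module R N]

/-- Elements of `N` killed, modulo `p`-torsion, by a power of `t`. -/
def torKer (p : PrimeSpectrum R) (t : R) : Submodule R N where
  carrier := {n | ∃ s ∈ p.asIdeal.primeCompl, ∃ k : ℕ, (s * t ^ k) • n = 0}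
  zero_mem' := ⟨1, one_mem _, 0, by simp⟩
  add_mem' := by
    rintro a b ⟨s, hs, k, hk⟩ ⟨s', hs', k', hk'⟩
    refine ⟨s * s', mul_mem hs hs', k + k', ?_⟩
    have e1 : s * s' * t ^ (k + k') = s' * t ^ k' * (s * t ^ k) := by ring
    have e2 : s * s' * t ^ (k + k') = s * t ^ k * (s' * t ^ k') := by ring
    have ha : (s * s' * t ^ (k + k')) • a = 0 := by rw [e1, mul_smul, hk, smul_zero]
    have hb : (s * s' * t ^ (k + k')) • b = 0 := by rw [e2, mul_smul, hk', smul_zero]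
    rw [smul_add, ha, hb, add_zero]
  smul_mem' := by
    rintro r a ⟨s, hs, k, hk⟩
    refine ⟨s, hs, k, ?_⟩
    rw [smul_comm, hk, smul_zero]

lemma mem_torKer_iff {p : PrimeSpectrum R} {t : R} {n : N} :
    n ∈ torKer (N := N) p t ↔ ∃ s ∈ p.asIdeal.primeCompl, ∃ k : ℕ, (s * t ^ k) • n = 0 :=
  Iff.rfl

/-- Key construction: a prime which is the annihilator (mod `torKer`) of a multiple of `n`. -/
lemma exists_prime_mul_ann [IsNoetherianRing R] (p : PrimeSpectrum R) (t : R) {n : N}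
    (hn : n ∉ torKer (N := N) p t) :
    ∃ (P : Ideal R) (c : R), P.IsPrime ∧ (c • n ∉ torKer (N := N) p t) ∧
      (∀ r : R, r ∈ P ↔ (r * c) • n ∈ torKer (N := N) p t) := by
  have hnb : (Submodule.Quotient.mk n : N ⧸ torKer (N := N) p t) ≠ 0 := by
    rw [ne_eq, Submodule.Quotient.mk_eq_zero]; exact hn
  obtain ⟨P, hPass, -⟩ :=
    exists_le_isAssociatedPrime_of_isNoetherianRing R
      (⟨Submodule.Quotient.mk n, Submodule.mem_span_singleton_self _⟩ :
        ↥(R ∙ (Submodule.Quotient.mk n : N ⧸ torKer (N := N) p t)))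
      (fun h0 => hnb (by simpa [Submodule.mk_eq_zero] using h0))
  obtain ⟨hPprime, y, hy⟩ := isAssociatedPrime_iff.mp hPass
  obtain ⟨c, hc⟩ := Submodule.mem_span_singleton.mp y.2
  have hyne : y ≠ 0 := by
    rintro rfl
    apply hPprime.ne_top
    rw [hy, Ideal.eq_top_iff_one, Submodule.mem_colon_singleton, smul_zero]
    exact zero_mem _
  have hcoe : ∀ r : R, r • (y : N ⧸ torKer (N := N) p t)
      = (Submodule.Quotient.mk ((r * c) • n) : N ⧸ torKer (N := N) p t) := by
    intro r
    rw [← hc, ← mul_smul, ← Submodule.Quotient.mk_smul]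
  have hmem : ∀ r : R, r ∈ P ↔ (r * c) • n ∈ torKer (N := N) p t := by
    intro r
    rw [hy, Submodule.mem_colon_singleton, Submodule.mem_bot]
    constructor
    · intro h
      have h2 : r • (y : N ⧸ torKer (N := N) p t) = 0 := by
        rw [← Submodule.coe_smul, h, ZeroMemClass.coe_zero]
      rw [hcoe r, Submodule.Quotient.mk_eq_zero] at h2
      exact h2
    · intro h
      refine Subtype.ext ?_
      rw [Submodule.coe_smul, ZeroMemClass.coe_zero, hcoe r,
        Submodule.Quotient.mk_eq_zero]
      exact h
  refine ⟨P, c, hPprime, ?_, hmem⟩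
  intro hcn
  apply hyne
  refine Subtype.ext ?_
  rw [ZeroMemClass.coe_zero, ← hc, ← Submodule.Quotient.mk_smul,
    Submodule.Quotient.mk_eq_zero]
  exact hcn

lemma exists_pow_smul_eq_zero [IsNoetherianRing R] {p : PrimeSpectrum R} (t : R)
    (x : LocalizedModule p.asIdeal.primeCompl N)
    (ht : ∀ (q : PrimeSpectrum R) (h : q.asIdeal ≤ p.asIdeal),
      specMap N p q h x ≠ 0 → t ∈ q.asIdeal) :
    ∃ k : ℕ, t ^ k • x = 0 := by
  induction x using LocalizedModule.induction_on with
  | _ n u =>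
    by_cases hn : n ∈ torKer (N := N) p t
    · obtain ⟨s, hs, k, hk⟩ := hn
      refine ⟨k, ?_⟩
      rw [LocalizedModule.smul'_mk, mk_eq_zero_iff']
      exact ⟨s, hs, by rw [← mul_smul]; exact hk⟩
    · exfalso
      obtain ⟨P, c, hP, hcn, hmem⟩ := exists_prime_mul_ann p t hn
      have hPle : P ≤ p.asIdeal := by
        intro r hr
        by_contra hrp
        apply hcn
        obtain ⟨s, hs, k, hk⟩ := (hmem r).mp hr
        refine ⟨s * r, mul_mem hs hrp, k, ?_⟩
        rw [show (s * r * t ^ k) • c • n = (s * t ^ k) • (r * c) • n by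
          rw [← mul_smul, ← mul_smul]; ring_nf]
        exact hk
      have htP : t ∈ P := by
        refine ht ⟨P, hP⟩ hPle ?_
        rw [specMap_mk', ne_eq, mk_eq_zero_iff']
        rintro ⟨s, hsP, hsn⟩
        refine hsP ((hmem s).mpr ⟨1, one_mem _, 0, ?_⟩)
        rw [show (1 * t ^ 0) • (s * c) • n = c • s • n by
          rw [← mul_smul, ← mul_smul]; ring_nf]
        rw [hsn, smul_zero]
      apply hcn
      obtain ⟨s, hs, k, hk⟩ := (hmem t).mp htP
      refine ⟨s, hs, k + 1, ?_⟩
      rw [show (s * t ^ (k + 1)) • c • n = (s * t ^ k) • (t * c) • n by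
        rw [← mul_smul, ← mul_smul]; ring_nf]
      exact hk

end Glob
namespace Glob

variable {R : Type*} [CommRing R]
variable {N : Type*} [AddCommGroup N] [Module R N]

lemma mem_torKer_one_iff {p : PrimeSpectrum R} {n : N} :
    n ∈ torKer (N := N) p 1 ↔ ∃ s ∈ p.asIdeal.primeCompl, s • n = 0 := by
  constructor
  · rintro ⟨s, hs, k, hk⟩
    exact ⟨s, hs, by simpa using hk⟩
  · rintro ⟨s, hs, h⟩
    exact ⟨s, hs, 0, by simpa using h⟩

lemma exists_assoc_of_ne_zero [IsNoetherianRing R] {p : PrimeSpectrum R}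
    (x : LocalizedModule p.asIdeal.primeCompl N) (hx : x ≠ 0) :
    ∃ (q : PrimeSpectrum R) (h : q.asIdeal ≤ p.asIdeal),
      q.asIdeal ∈ associatedPrimes R N ∧ specMap N p q h x ≠ 0 := by
  induction x using LocalizedModule.induction_on with
  | _ n u =>
    have hn : n ∉ torKer (N := N) p 1 := by
      rw [mem_torKer_one_iff]
      rintro ⟨s, hs, hk⟩
      exact hx (by rw [mk_eq_zero_iff']; exact ⟨s, hs, hk⟩)
    obtain ⟨P, c, hP, hcn, hmem⟩ := exists_prime_mul_ann p 1 hn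
    rw [mem_torKer_one_iff] at hcn
    have hmem' : ∀ r : R, r ∈ P ↔ ∃ s ∈ p.asIdeal.primeCompl, (s * (r * c)) • n = 0 := by
      intro r
      rw [hmem r, mem_torKer_one_iff]
      constructor
      · rintro ⟨s, hs, h⟩
        exact ⟨s, hs, by rwa [mul_smul]⟩
      · rintro ⟨s, hs, h⟩
        exact ⟨s, hs, by rwa [← mul_smul]⟩
    have hPle : P ≤ p.asIdeal := by
      intro r hr
      by_contra hrp
      apply hcn
      obtain ⟨s, hs, h⟩ := (hmem' r).mp hr
      refine ⟨s * r, mul_mem hs hrp, ?_⟩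
      rw [← mul_smul, show s * r * c = s * (r * c) by ring]
      exact h
    obtain ⟨G, hG⟩ := (IsNoetherian.noetherian P : P.FG)
    have hchoice : ∀ r : R, r ∈ P → ∃ s, s ∈ p.asIdeal.primeCompl ∧
        (s * (r * c)) • n = 0 := fun r hr => by
      obtain ⟨s, hs, h⟩ := (hmem' r).mp hr
      exact ⟨s, hs, h⟩
    choose! sf hsf hsfk using hchoice
    set s0 : R := ∏ r ∈ G, sf r with hs0def
    have hs0 : s0 ∈ p.asIdeal.primeCompl := by
      refine Submonoid.prod_mem _ (fun r hr => hsf r ?_)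
      rw [← hG]; exact Submodule.subset_span hr
    have hass : P ∈ associatedPrimes R N := by
      refine isAssociatedPrime_iff.mpr ⟨hP, (s0 * c) • n, ?_⟩
      ext r
      rw [Submodule.mem_colon_singleton, Submodule.mem_bot]
      constructor
      · intro hr
        have hr' : r ∈ Submodule.span R (G : Set R) := by rw [hG]; exact hr
        clear hr
        induction hr' using Submodule.span_induction with
        | mem g hg =>
          obtain ⟨d, hd⟩ := Finset.dvd_prod_of_mem sf hg
          have hgP : g ∈ P := by rw [← hG]; exact Submodule.subset_span hg
          have e : g * (s0 * c) = d * (sf g * (g * c)) := by rw [hs0def, hd]; ring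
          rw [← mul_smul, e, mul_smul, hsfk g hgP, smul_zero]
        | zero => rw [zero_smul]
        | add a b _ _ ha hb => rw [add_smul, ha, hb, add_zero]
        | smul a r' _ hr' => rw [smul_eq_mul, mul_smul, hr', smul_zero]
      · intro hr
        rw [← mul_smul] at hr
        have h1 : r * s0 ∈ P := by
          rw [hmem' (r * s0)]
          refine ⟨1, one_mem _, ?_⟩
          rw [show 1 * (r * s0 * c) = r * (s0 * c) by ring]
          exact hr
        exact (hP.mem_or_mem h1).resolve_right (fun h => hs0 (hPle h))
    refine ⟨⟨P, hP⟩, hPle, hass, ?_⟩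
    rw [specMap_mk', ne_eq, mk_eq_zero_iff']
    rintro ⟨s, hsP, hsn⟩
    refine hsP ((hmem' s).mpr ⟨1, one_mem _, ?_⟩)
    rw [show 1 * (s * c) = c * s by ring, mul_smul, hsn, smul_zero]

end Glob
namespace Glob

variable {R : Type*} [CommRing R]
variable {N : Type*} [AddCommGroup N] [Module R N]

lemma isAssociatedPrime_submodule_or_quotient [IsNoetherianRing R] {P : Ideal R} (N' : Submodule R N)
    (h : IsAssociatedPrime P N) :
    IsAssociatedPrime P ↥N' ∨ IsAssociatedPrime P (N ⧸ N') := by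
  obtain ⟨hP, x, hx⟩ := isAssociatedPrime_iff.mp h
  have hxmem : ∀ r : R, r ∈ P ↔ r • x = 0 := fun r => by
    rw [hx, Submodule.mem_colon_singleton, Submodule.mem_bot]
  by_cases hcase : ∃ a : R, a • x ∈ N' ∧ a • x ≠ 0
  · obtain ⟨a, haN, ha0⟩ := hcase
    left
    refine isAssociatedPrime_iff.mpr ⟨hP, ⟨a • x, haN⟩, ?_⟩
    ext r
    rw [Submodule.mem_colon_singleton, Submodule.mem_bot]
    have hiff : (r • (⟨a • x, haN⟩ : ↥N') = 0) ↔ r • a • x = 0 := by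
      rw [Subtype.ext_iff]; simp
    rw [hiff]
    constructor
    · intro hr
      rw [smul_comm, (hxmem r).mp hr, smul_zero]
    · intro hr
      have h1 : r * a ∈ P := (hxmem _).mpr (by rwa [mul_smul])
      have haP : a ∉ P := fun ha => ha0 ((hxmem a).mp ha)
      exact (hP.mem_or_mem h1).resolve_right haP
  · push_neg at hcase
    right
    refine isAssociatedPrime_iff.mpr ⟨hP, Submodule.Quotient.mk x, ?_⟩
    ext r
    rw [Submodule.mem_colon_singleton, Submodule.mem_bot, ← Submodule.Quotient.mk_smul,
      Submodule.Quotient.mk_eq_zero]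
    constructor
    · intro hr
      rw [(hxmem r).mp hr]; exact zero_mem _
    · intro hr
      exact (hxmem r).mpr (hcase r hr)

lemma isAssociatedPrime_cyclic_eq [IsNoetherianRing R] {x : N} {P Q : Ideal R} (hP : P.IsPrime)
    (hann : (R ∙ x).annihilator = P) (hQ : IsAssociatedPrime Q ↥(R ∙ x)) : Q = P := by
  obtain ⟨hQp, y, hy⟩ := isAssociatedPrime_iff.mp hQ
  obtain ⟨c, hc⟩ := Submodule.mem_span_singleton.mp y.2
  have hy0 : (y : N) ≠ 0 := by
    intro h0
    apply hQp.ne_top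
    rw [hy, show y = 0 from Subtype.ext h0, Ideal.eq_top_iff_one, Submodule.mem_colon_singleton,
      smul_zero]
    exact zero_mem _
  have hxann : ∀ r : R, r ∈ P ↔ r • x = 0 := fun r => by
    rw [← hann, Submodule.mem_annihilator_span_singleton]
  have hcP : c ∉ P := fun h => hy0 (by rw [← hc, (hxann c).mp h])
  ext r
  rw [hy, Submodule.mem_colon_singleton, Submodule.mem_bot]
  have hiff : (r • y = 0) ↔ r • (y : N) = 0 := by
    rw [Subtype.ext_iff]; simp
  rw [hiff, ← hc, ← mul_smul, ← hxann (r * c)]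
  constructor
  · intro h
    exact (hP.mem_or_mem h).resolve_right hcP
  · intro h
    exact P.mul_mem_right c h

lemma associatedPrimes_finite [IsNoetherianRing R] [Module.Finite R N] :
    (associatedPrimes R N).Finite := by
  have hNoeth : IsNoetherian R N := inferInstance
  have key : ∀ N' : Submodule R N, (associatedPrimes R (N ⧸ N')).Finite := by
    intro N'
    refine IsNoetherian.induction
      (P := fun N' : Submodule R N => (associatedPrimes R (N ⧸ N')).Finite) ?_ N'
    intro N' ih
    by_cases htop : N' = ⊤
    · have : Subsingleton (N ⧸ N') :=
        Submodule.Quotient.subsingleton_iff.mpr htop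
      rw [associatedPrimes.eq_empty_of_subsingleton]
      exact Set.finite_empty
    · obtain ⟨x, hx⟩ : ∃ x : N, x ∉ N' := by
        by_contra hall
        push_neg at hall
        exact htop (Submodule.eq_top_iff'.mpr hall)
      have hxb : (Submodule.Quotient.mk x : N ⧸ N') ≠ 0 := by
        rw [ne_eq, Submodule.Quotient.mk_eq_zero]; exact hx
      obtain ⟨P, hPass, -⟩ :=
        exists_le_isAssociatedPrime_of_isNoetherianRing R
          (Submodule.Quotient.mk x : N ⧸ N') hxb
      obtain ⟨hP, y, hy⟩ := isAssociatedPrime_iff.mp hPass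
      have hy0 : y ≠ 0 := by
        rintro rfl
        apply hP.ne_top
        rw [hy, Ideal.eq_top_iff_one, Submodule.mem_colon_singleton, smul_zero]
        exact zero_mem _
      obtain ⟨y₀, rfl⟩ := Submodule.Quotient.mk_surjective N' y
      have hy₀ : y₀ ∉ N' := fun h =>
        hy0 ((Submodule.Quotient.mk_eq_zero N').mpr h)
      have hJ : N' < N' ⊔ R ∙ y₀ := by
        rw [lt_iff_le_and_ne]
        refine ⟨le_sup_left, fun e => hy₀ ?_⟩
        rw [e]
        exact (le_sup_right : (R ∙ y₀) ≤ N' ⊔ R ∙ y₀) (Submodule.mem_span_singleton_self y₀)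
      have hmapbot : N'.map N'.mkQ = ⊥ := by
        rw [eq_bot_iff]
        rintro z ⟨w, hw, rfl⟩
        simpa [Submodule.mem_bot, Submodule.mkQ_apply,
          Submodule.Quotient.mk_eq_zero] using hw
      have hspan : (R ∙ (Submodule.Quotient.mk y₀ : N ⧸ N'))
          = (N' ⊔ R ∙ y₀).map N'.mkQ := by
        rw [Submodule.map_sup, Submodule.map_span, Set.image_singleton, hmapbot,
          bot_sup_eq, Submodule.mkQ_apply]
      have hfinJ := ih (N' ⊔ R ∙ y₀) hJ
      have e := Submodule.quotientQuotientEquivQuotient N' (N' ⊔ R ∙ y₀) le_sup_left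
      have hsub : associatedPrimes R (N ⧸ N') ⊆
          insert P (associatedPrimes R (N ⧸ (N' ⊔ R ∙ y₀))) := by
        intro Q hQ
        rcases isAssociatedPrime_submodule_or_quotient
            (R ∙ (Submodule.Quotient.mk y₀ : N ⧸ N')) hQ with h1 | h2
        · exact Set.mem_insert_iff.mpr (Or.inl (isAssociatedPrime_cyclic_eq hP (by
            ext r; rw [hy, Submodule.mem_annihilator_span_singleton, Submodule.mem_colon_singleton,
              Submodule.mem_bot]) h1))
        · rw [hspan] at h2
          exact Set.mem_insert_iff.mpr (Or.inr ((e.isAssociatedPrime_iff).mp h2))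
      exact (hfinJ.insert P).subset hsub
  have e0 : (N ⧸ (⊥ : Submodule R N)) ≃ₗ[R] N := Submodule.quotEquivOfEqBot ⊥ rfl
  have hfin := key ⊥
  rwa [LinearEquiv.AssociatedPrimes.eq e0] at hfin

end Glob
namespace Glob

variable {R : Type*} [CommRing R]
variable {N : Type*} [AddCommGroup N] [Module R N]

lemma eq_zero_of_localization (y : N)
    (hy : ∀ p : PrimeSpectrum R,
      (LocalizedModule.mk y 1 : LocalizedModule p.asIdeal.primeCompl N) = 0) : y = 0 := by
  by_contra hy0
  have hann : (R ∙ y).annihilator ≠ ⊤ := by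
    rw [Ne, Ideal.eq_top_iff_one, Submodule.mem_annihilator_span_singleton, one_smul]
    exact hy0
  obtain ⟨m, hm, hle⟩ := Ideal.exists_le_maximal _ hann
  obtain ⟨s, hs, hsy⟩ := (mk_eq_zero_iff' y 1).mp (hy ⟨m, hm.isPrime⟩)
  exact hs (hle ((Submodule.mem_annihilator_span_singleton y s).mpr hsy))

lemma exists_glob [IsNoetherianRing R] [Module.Finite R N]
    (τ : ∀ p : PrimeSpectrum R, LocalizedModule p.asIdeal.primeCompl N)
    (hτ : ∀ (p q : PrimeSpectrum R) (h : q.asIdeal ≤ p.asIdeal),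
      specMap N p q h (τ p) = τ q) :
    ∃ y : N, ∀ p : PrimeSpectrum R, τ p = LocalizedModule.mk y 1 := by
  classical
  let I : Ideal R :=
    { carrier := {r | ∃ y : N, ∀ p : PrimeSpectrum R, r • τ p = LocalizedModule.mk y 1}
      add_mem' := by
        rintro a b ⟨ya, hya⟩ ⟨yb, hyb⟩
        refine ⟨ya + yb, fun p => ?_⟩
        rw [add_smul, hya p, hyb p]
        exact (map_add (mkLinearMap p.asIdeal.primeCompl N) ya yb).symm
      zero_mem' := ⟨0, fun p => by
        rw [zero_smul]; exact (LocalizedModule.zero_mk 1).symm⟩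
      smul_mem' := by
        rintro r a ⟨y, hy⟩
        refine ⟨r • y, fun p => ?_⟩
        rw [smul_eq_mul, mul_smul, hy p, LocalizedModule.smul'_mk] }
  have hIone : (1 : R) ∈ I := by
    by_contra hne1
    have hItop : I ≠ ⊤ := fun h => hne1 (h ▸ Submodule.mem_top)
    obtain ⟨m0, hm0, hIm0⟩ := Ideal.exists_le_maximal I hItop
    set P0 : PrimeSpectrum R := ⟨m0, hm0.isPrime⟩ with hP0
    obtain ⟨y0, s0, hrep⟩ := LocalizedModule.induction_on
      (β := fun z : LocalizedModule P0.asIdeal.primeCompl N =>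
        ∃ a b, z = LocalizedModule.mk a b)
      (fun m s => ⟨m, s, rfl⟩) (τ P0)
    have hglob0 : (s0 : R) • τ P0 = LocalizedModule.mk y0 1 := by
      rw [hrep, LocalizedModule.smul'_mk, ← Submonoid.smul_def, LocalizedModule.mk_cancel]
    set τ' : ∀ p : PrimeSpectrum R, LocalizedModule p.asIdeal.primeCompl N :=
      fun p => (s0 : R) • τ p - LocalizedModule.mk y0 1 with hτ'def
    have hτ'mk : ∀ p : PrimeSpectrum R,
        τ' p = (s0 : R) • τ p - LocalizedModule.mk y0 1 := fun p => rfl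
    have hτ' : ∀ (p q : PrimeSpectrum R) (h : q.asIdeal ≤ p.asIdeal),
        specMap N p q h (τ' p) = τ' q := by
      intro p q h
      rw [hτ'mk p, hτ'mk q, map_sub, map_smul, hτ p q h]
      congr 1
      exact specMap_mk N p q h y0
    have hvan : ∀ (p : PrimeSpectrum R), p.asIdeal ≤ m0 → τ' p = 0 := by
      intro p h
      rw [← hτ' P0 p h, hτ'mk P0, hglob0, sub_self, map_zero]
    have hassfin : (associatedPrimes R N).Finite := associatedPrimes_finite
    have hF0fin : ({P ∈ associatedPrimes R N | ¬ P ≤ m0}).Finite :=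
      hassfin.subset (Set.sep_subset _ _)
    have hchoice : ∀ P : Ideal R, P ∈ associatedPrimes R N → ¬ P ≤ m0 →
        ∃ x, x ∈ P ∧ x ∉ m0 := fun P _ hle => SetLike.not_le_iff_exists.mp hle
    choose! tf htfP htfm using hchoice
    set F : Finset (Ideal R) := hF0fin.toFinset with hFdef
    set t : R := ∏ P ∈ F, tf P with htdef
    have hmemF : ∀ P : Ideal R, P ∈ F ↔ (P ∈ associatedPrimes R N ∧ ¬ P ≤ m0) := by
      intro P
      rw [hFdef, Set.Finite.mem_toFinset]
      exact Iff.rfl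
    have htm0 : t ∉ m0 := by
      rw [htdef]
      refine Finset.prod_induction tf (fun r => r ∉ m0)
        (fun a b ha hb hab => ?_) (fun h1 => hm0.ne_top (Ideal.eq_top_of_isUnit_mem _ h1 isUnit_one)) ?_
      · rcases hm0.isPrime.mem_or_mem hab with h | h
        · exact ha h
        · exact hb h
      · intro P hP
        obtain ⟨h1, h2⟩ := (hmemF P).mp hP
        exact htfm P h1 h2
    have htq : ∀ q : PrimeSpectrum R, τ' q ≠ 0 → t ∈ q.asIdeal := by
      intro q hq
      obtain ⟨q', h', hass, hne⟩ := exists_assoc_of_ne_zero (τ' q) hq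
      rw [hτ' q q' h'] at hne
      have hq'm : ¬ q'.asIdeal ≤ m0 := fun hle => hne (hvan q' hle)
      have hq'F : q'.asIdeal ∈ F := (hmemF _).mpr ⟨hass, hq'm⟩
      obtain ⟨d, hd⟩ : tf q'.asIdeal ∣ t := by
        rw [htdef]; exact Finset.dvd_prod_of_mem tf hq'F
      rw [hd]
      exact h' (Ideal.mul_mem_right d _ (htfP q'.asIdeal hass hq'm))
    have hpow : ∀ p : PrimeSpectrum R, ∃ k, t ^ k • τ' p = 0 := by
      intro p
      refine exists_pow_smul_eq_zero t (τ' p) (fun q h hne => ?_)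
      rw [hτ' p q h] at hne
      exact htq q hne
    have hchain : ∀ i j : ℕ, i ≤ j → LinearMap.ker (LinearMap.lsmul R N (t ^ i))
        ≤ LinearMap.ker (LinearMap.lsmul R N (t ^ j)) := by
      intro i j hij n hn
      rw [LinearMap.mem_ker, LinearMap.lsmul_apply] at hn ⊢
      obtain ⟨d, rfl⟩ := Nat.exists_eq_add_of_le hij
      rw [pow_add, mul_comm, mul_smul, hn, smul_zero]
    obtain ⟨k0, hk0⟩ := monotone_stabilizes_iff_noetherian.mpr
      (inferInstance : IsNoetherian R N)
      ⟨fun k => LinearMap.ker (LinearMap.lsmul R N (t ^ k)), fun i j hij => hchain i j hij⟩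
    have hkill : ∀ p : PrimeSpectrum R, t ^ k0 • τ' p = 0 := by
      intro p
      obtain ⟨k, hk⟩ := hpow p
      rcases le_total k k0 with hle | hle
      · obtain ⟨d, rfl⟩ := Nat.exists_eq_add_of_le hle
        rw [pow_add, mul_comm, mul_smul, hk, smul_zero]
      · have hker : LinearMap.ker (LinearMap.lsmul R N (t ^ k))
            = LinearMap.ker (LinearMap.lsmul R N (t ^ k0)) := (hk0 k hle).symm
        revert hk
        induction (τ' p) using LocalizedModule.induction_on with
        | _ n u =>
          intro hk
          rw [LocalizedModule.smul'_mk, mk_eq_zero_iff'] at hk ⊢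
          obtain ⟨s, hs, hsk⟩ := hk
          refine ⟨s, hs, ?_⟩
          have hmem : s • n ∈ LinearMap.ker (LinearMap.lsmul R N (t ^ k)) := by
            rw [LinearMap.mem_ker, LinearMap.lsmul_apply, smul_comm]
            exact hsk
          rw [hker, LinearMap.mem_ker, LinearMap.lsmul_apply] at hmem
          rw [smul_comm]
          exact hmem
    have hmemI : t ^ k0 * (s0 : R) ∈ I := by
      refine ⟨t ^ k0 • y0, fun p => ?_⟩
      have h2 : t ^ k0 • ((s0 : R) • τ p) = t ^ k0 • LocalizedModule.mk y0 1 := by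
        rw [← sub_eq_zero, ← smul_sub]
        exact hkill p
      rw [mul_smul, h2, LocalizedModule.smul'_mk]
    have hmm : t ^ k0 * (s0 : R) ∈ m0 := hIm0 hmemI
    rcases hm0.isPrime.mem_or_mem hmm with h | h
    · exact htm0 (hm0.isPrime.mem_of_pow_mem _ h)
    · exact s0.2 h
  obtain ⟨y, hy⟩ := hIone
  exact ⟨y, fun p => by rw [← one_smul R (τ p), hy p]⟩

end Glob

/-- Given a family of `R_p`-linear maps `φ_p : M_p → N_p` compatible with localization,
there is a unique `R`-linear map `ψ : M → N` localizing to `φ_p` at every prime `p`. -/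
theorem exists_unique_globalization [IsNoetherianRing R]
    (M N : Type*) [AddCommGroup M] [Module R M] [Module.Finite R M]
    [AddCommGroup N] [Module R N] [Module.Finite R N]
    (φ : ∀ p : PrimeSpectrum R,
      LocalizedModule p.asIdeal.primeCompl M
        →ₗ[Localization p.asIdeal.primeCompl] LocalizedModule p.asIdeal.primeCompl N)
    (hcomp : ∀ (p q : PrimeSpectrum R) (h : q.asIdeal ≤ p.asIdeal)
      (u : LocalizedModule p.asIdeal.primeCompl M),
        specMap N p q h (φ p u) = φ q (specMap M p q h u)) :
    ∃! ψ : M →ₗ[R] N, ∀ (p : PrimeSpectrum R) (u : LocalizedModule p.asIdeal.primeCompl M),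
      φ p u = LocalizedModule.map p.asIdeal.primeCompl ψ u := by
  classical
  have hτ : ∀ m : M, ∀ (p q : PrimeSpectrum R) (h : q.asIdeal ≤ p.asIdeal),
      specMap N p q h (φ p (LocalizedModule.mk m 1)) = φ q (LocalizedModule.mk m 1) := by
    intro m p q h
    rw [hcomp p q h]
    congr 1
    exact specMap_mk M p q h m
  choose y hy using fun m : M =>
    Glob.exists_glob (fun p => φ p (LocalizedModule.mk m 1)) (hτ m)
  have huniq : ∀ (m : M) (z : N), (∀ p : PrimeSpectrum R,
      φ p (LocalizedModule.mk m 1) = LocalizedModule.mk z 1) → z = y m := by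
    intro m z hz
    have hz0 : ∀ p : PrimeSpectrum R,
        (LocalizedModule.mk (z - y m) 1 : LocalizedModule p.asIdeal.primeCompl N) = 0 := by
      intro p
      rw [show LocalizedModule.mk (z - y m) (1 : p.asIdeal.primeCompl)
          = (LocalizedModule.mk z 1 : LocalizedModule p.asIdeal.primeCompl N)
            - LocalizedModule.mk (y m) 1 from
        map_sub (mkLinearMap p.asIdeal.primeCompl N) z (y m), ← hz p, ← hy m p, sub_self]
    exact sub_eq_zero.mp (Glob.eq_zero_of_localization _ hz0)
  have hsmulR : ∀ (p : PrimeSpectrum R) (r : R)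
      (v : LocalizedModule p.asIdeal.primeCompl M), φ p (r • v) = r • φ p v := by
    intro p r v
    rw [← algebraMap_smul (Localization p.asIdeal.primeCompl) r v, map_smul,
      algebraMap_smul]
  set ψ : M →ₗ[R] N :=
    { toFun := y
      map_add' := by
        intro m1 m2
        refine (huniq (m1 + m2) (y m1 + y m2) ?_).symm
        intro p
        rw [show (LocalizedModule.mk (m1 + m2) 1 :
            LocalizedModule p.asIdeal.primeCompl M)
          = LocalizedModule.mk m1 1 + LocalizedModule.mk m2 1 from
          map_add (mkLinearMap p.asIdeal.primeCompl M) m1 m2, map_add, hy m1 p, hy m2 p]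
        exact (map_add (mkLinearMap p.asIdeal.primeCompl N) (y m1) (y m2)).symm
      map_smul' := by
        intro r m
        simp only [RingHom.id_apply]
        refine (huniq (r • m) (r • y m) ?_).symm
        intro p
        rw [show (LocalizedModule.mk (r • m) 1 :
            LocalizedModule p.asIdeal.primeCompl M)
          = r • LocalizedModule.mk m 1 from (LocalizedModule.smul'_mk r m 1).symm,
          hsmulR p r, hy m p, LocalizedModule.smul'_mk] } with hψdef
  have hprop : ∀ (p : PrimeSpectrum R) (u : LocalizedModule p.asIdeal.primeCompl M),
      φ p u = LocalizedModule.map p.asIdeal.primeCompl ψ u := by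
    intro p u
    induction u using LocalizedModule.induction_on with
    | _ m s =>
      apply Glob.localized_smul_cancel s
      rw [← hsmulR p s, LocalizedModule.map_mk]
      have h1 : (s : R) • (LocalizedModule.mk m s :
          LocalizedModule p.asIdeal.primeCompl M) = LocalizedModule.mk m 1 := by
        rw [LocalizedModule.smul'_mk, ← Submonoid.smul_def, LocalizedModule.mk_cancel]
      have h2 : (s : R) • (LocalizedModule.mk (ψ m) s :
          LocalizedModule p.asIdeal.primeCompl N) = LocalizedModule.mk (ψ m) 1 := by
        rw [LocalizedModule.smul'_mk, ← Submonoid.smul_def, LocalizedModule.mk_cancel]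
      rw [h1, h2, hy m p]
      rfl
  refine ⟨ψ, hprop, ?_⟩
  intro ψ' hψ'
  ext m
  have hz : ∀ p : PrimeSpectrum R,
      φ p (LocalizedModule.mk m 1) = LocalizedModule.mk (ψ' m) 1 := by
    intro p
    rw [hψ' p (LocalizedModule.mk m 1), LocalizedModule.map_mk]
  exact huniq m (ψ' m) hz
end

section
/- Let R be a commutative Noetherian ring and M a finitely generated R-module. Suppose σ = (σ_x)_{x ∈ Spec R} is a family with σ_x ∈ M_x that is compatible with localization, i.e., for primes q ⊆ p, the localization map M_p → M_q sends σ_p to σ_q. Then for every prime x there exist τ ∈ M, f ∈ R with f ∉ x, and an open neighborhood U of x in Spec R such that f ∉ y and σ_y = τ/f in M_y for all y ∈ U. -/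
open LocalizedModule

variable {R : Type*} [CommRing R]

/-- Smul by an element of `S` is injective on the localized module. -/
lemma aux_smul_inj {S : Submonoid R} (M : Type*) [AddCommGroup M] [Module R M]
    {u : R} (hu : u ∈ S) {a : LocalizedModule S M} (h : u • a = 0) : a = 0 := by
  have H := IsLocalizedModule.map_units (mkLinearMap S M) (⟨u, hu⟩ : S)
  rw [Module.End.isUnit_iff] at H
  exact H.injective (by simpa [Module.algebraMap_end_apply] using h)

lemma aux_vanish [IsNoetherianRing R]
    (M : Type*) [AddCommGroup M] [Module R M] [Module.Finite R M]
    (δ : ∀ p : PrimeSpectrum R, LocalizedModule p.asIdeal.primeCompl M)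
    (hδ : IsCompatible M δ) (x : PrimeSpectrum R) (hx : δ x = 0) (I : Ideal R) :
    ∃ g, g ∉ x.asIdeal ∧
      ∀ y : PrimeSpectrum R, I ≤ y.asIdeal → g ∉ y.asIdeal → δ y = 0 := by
  refine IsNoetherian.induction (P := fun I : Ideal R => ∃ g, g ∉ x.asIdeal ∧
      ∀ y : PrimeSpectrum R, I ≤ y.asIdeal → g ∉ y.asIdeal → δ y = 0) (fun I IH => ?_) I
  classical
  by_cases hIx : I ≤ x.asIdeal
  · obtain ⟨p, hp, hpx⟩ := Ideal.exists_minimalPrimes_le hIx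
    have hpprime : p.IsPrime := hp.1.1
    set P : PrimeSpectrum R := ⟨p, hpprime⟩ with hP
    have hδP : δ P = 0 := by rw [← hδ x P hpx, hx, map_zero]
    set K := LinearMap.ker (mkLinearMap P.asIdeal.primeCompl M) with hKdef
    obtain ⟨T, hT⟩ : K.FG := IsNoetherian.noetherian K
    have key : ∀ m : M, m ∈ K → ∃ u : R, u ∈ P.asIdeal.primeCompl ∧ u • m = 0 := by
      intro m hm
      have : LocalizedModule.mk m (1 : P.asIdeal.primeCompl)
          = LocalizedModule.mk (0 : M) 1 := by
        rw [LocalizedModule.zero_mk]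
        simpa [hKdef, LinearMap.mem_ker, LocalizedModule.mkLinearMap_apply] using hm
      rw [LocalizedModule.mk_eq] at this
      obtain ⟨u, hu⟩ := this
      exact ⟨u.1, u.2, by simpa [Submonoid.smul_def] using hu⟩
    choose! u hu1 hu2 using key
    set s : R := ∏ m ∈ T, u m with hs
    have hsP : s ∈ P.asIdeal.primeCompl :=
      Submonoid.prod_mem _ (fun m hm => hu1 m (hT ▸ Submodule.subset_span hm))
    have hsT : ∀ m ∈ T, s • m = 0 := by
      intro m hm
      rw [hs, ← Finset.mul_prod_erase _ _ hm, mul_comm, mul_smul,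
        hu2 m (hT ▸ Submodule.subset_span hm), smul_zero]
    have hsK : ∀ m ∈ K, s • m = 0 := by
      intro m hm
      rw [← hT] at hm
      induction hm using Submodule.span_induction with
      | mem m hm => exact hsT m hm
      | zero => simp
      | add a b _ _ ha hb => rw [smul_add, ha, hb, add_zero]
      | smul r a _ ha => rw [smul_comm, ha, smul_zero]
    have hvan : ∀ y : PrimeSpectrum R, P.asIdeal ≤ y.asIdeal →
        s ∉ y.asIdeal → δ y = 0 := by
      intro y hPy hsy
      obtain ⟨m, t, hmt⟩ : ∃ m t, δ y = LocalizedModule.mk m t :=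
        LocalizedModule.induction_on (fun m t => ⟨m, t, rfl⟩) (δ y)
      have h1 : specMap M y P hPy (δ y) = 0 := by rw [hδ y P hPy, hδP]
      have h2 : t.1 • δ y = mkLinearMap y.asIdeal.primeCompl M m := by
        rw [hmt, LocalizedModule.smul'_mk, LocalizedModule.mkLinearMap_apply]
        exact LocalizedModule.mk_cancel t m
      have h3 : mkLinearMap P.asIdeal.primeCompl M m = 0 := by
        have := congrArg (specMap M y P hPy) h2
        rw [map_smul, h1, smul_zero, specMap_mk] at this
        exact this.symm
      have hmK : m ∈ K := h3
      have h4 : s • δ y = 0 := by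
        rw [hmt, LocalizedModule.smul'_mk, hsK m hmK, LocalizedModule.zero_mk]
      exact aux_smul_inj M hsy h4
    have hfin : (Ideal.minimalPrimes I \ {p}).Finite := by
      refine Set.Finite.subset ?_ Set.diff_subset
      rw [Ideal.minimalPrimes_eq_comap]
      exact (minimalPrimes.finite_of_isNoetherianRing _).image _
    set F := hfin.toFinset with hF
    set J : Ideal R := F.inf id with hJdef
    have hJI : I ≤ J := Finset.le_inf fun q hq =>
      ((hfin.mem_toFinset.1 hq).1 : q ∈ Ideal.minimalPrimes I).1.2
    have hJp : ¬J ≤ p := by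
      intro h
      obtain ⟨q, hqF, hqp⟩ := hpprime.inf_le'.1 h
      have hq := hfin.mem_toFinset.1 hqF
      exact hq.2 (le_antisymm hqp (hp.2 hq.1.1 hqp))
    have hJ : I < J := lt_of_le_of_ne hJI fun h => hJp (h ▸ hp.1.2)
    obtain ⟨g₂, hg₂x, hg₂⟩ := IH J hJ
    have hsp : s ∉ p := hsP
    set J₁ : Ideal R := p ⊔ Ideal.span {s} with hJ₁def
    have hsJ₁ : s ∈ J₁ := Ideal.mem_sup_right (Ideal.subset_span rfl)
    have hJ₁ : I < J₁ := lt_of_le_of_lt hp.1.2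
      (lt_of_le_of_ne le_sup_left fun h => hsp (h ▸ hsJ₁))
    obtain ⟨g₁, hg₁x, hg₁⟩ := IH J₁ hJ₁
    refine ⟨g₁ * g₂, ?_, ?_⟩
    · intro h
      rcases x.isPrime.mem_or_mem h with h | h
      exacts [hg₁x h, hg₂x h]
    · intro y hIy hgy
      have hg₁y : g₁ ∉ y.asIdeal := fun h => hgy (Ideal.mul_mem_right _ _ h)
      have hg₂y : g₂ ∉ y.asIdeal := fun h => hgy (Ideal.mul_mem_left _ _ h)
      by_cases hpy : p ≤ y.asIdeal
      · by_cases hsy : s ∈ y.asIdeal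
        · refine hg₁ y (sup_le hpy ?_) hg₁y
          rw [Ideal.span_le, Set.singleton_subset_iff]
          exact hsy
        · exact hvan y hpy hsy
      · obtain ⟨q, hq, hqy⟩ := Ideal.exists_minimalPrimes_le hIy
        have hqp : q ≠ p := fun h => hpy (h ▸ hqy)
        have hqF : q ∈ F := hfin.mem_toFinset.2 ⟨hq, hqp⟩
        exact hg₂ y (le_trans (Finset.inf_le hqF) hqy) hg₂y
  · obtain ⟨g, hgI, hgx⟩ := SetLike.not_le_iff_exists.1 hIx
    exact ⟨g, hgx, fun y hIy hgy => absurd (hIy hgI) hgy⟩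

/-- Local representability: any family of germs compatible with localization is, in a
neighborhood of each point `x` of `Spec R`, of the form `τ/f` for some `τ ∈ M`, `f ∉ x`. -/
theorem locally_of_fraction_form [IsNoetherianRing R]
    (M : Type*) [AddCommGroup M] [Module R M] [Module.Finite R M]
    (σ : ∀ p : PrimeSpectrum R, LocalizedModule p.asIdeal.primeCompl M)
    (hσ : IsCompatible M σ) (x : PrimeSpectrum R) :
    ∃ (τ : M) (f : R) (_ : f ∉ x.asIdeal) (U : Set (PrimeSpectrum R)),
      IsOpen U ∧ x ∈ U ∧
        ∀ y ∈ U, ∃ hy : f ∉ y.asIdeal, σ y = LocalizedModule.mk τ ⟨f, hy⟩ := by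
  obtain ⟨τ, t, hmt⟩ : ∃ m t, σ x = LocalizedModule.mk m t :=
    LocalizedModule.induction_on (fun m t => ⟨m, t, rfl⟩) (σ x)
  set f : R := t.1 with hf
  set δ : ∀ p : PrimeSpectrum R, LocalizedModule p.asIdeal.primeCompl M :=
    fun y => f • σ y - mkLinearMap y.asIdeal.primeCompl M τ with hδdef
  have hδ : IsCompatible M δ := by
    intro p q h
    rw [hδdef]
    simp only [map_sub, map_smul, hσ p q h, specMap_mk]
  have hδx : δ x = 0 := by
    rw [hδdef]
    simp only [hmt, LocalizedModule.smul'_mk, LocalizedModule.mkLinearMap_apply]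
    rw [show f • τ = t • τ from rfl, LocalizedModule.mk_cancel, sub_self]
  obtain ⟨g, hgx, hg⟩ := aux_vanish M δ hδ x hδx ⊥
  refine ⟨τ, f, t.2, {y | f * g ∉ y.asIdeal}, ?_, ?_, ?_⟩
  · exact (PrimeSpectrum.isOpen_iff _).2 ⟨Ideal.span {f * g}, by
      ext y
      simp [PrimeSpectrum.mem_zeroLocus, Set.singleton_subset_iff]⟩
  · exact fun h => (x.isPrime.mem_or_mem h).elim t.2 hgx
  · intro y hy
    have hfy : f ∉ y.asIdeal := fun h => hy (Ideal.mul_mem_right _ _ h)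
    have hgy : g ∉ y.asIdeal := fun h => hy (Ideal.mul_mem_left _ _ h)
    refine ⟨hfy, ?_⟩
    have h0 : δ y = 0 := hg y bot_le hgy
    have h1 : f • σ y = mkLinearMap y.asIdeal.primeCompl M τ := by
      rwa [hδdef, sub_eq_zero] at h0
    have h2 : f • LocalizedModule.mk τ (⟨f, hfy⟩ : y.asIdeal.primeCompl)
        = mkLinearMap y.asIdeal.primeCompl M τ := by
      rw [LocalizedModule.smul'_mk, LocalizedModule.mkLinearMap_apply]
      exact LocalizedModule.mk_cancel (⟨f, hfy⟩ : y.asIdeal.primeCompl) τ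
    have : f • (σ y - LocalizedModule.mk τ ⟨f, hfy⟩) = 0 := by
      rw [smul_sub, h1, h2, sub_self]
    have := aux_smul_inj M hfy this
    rwa [sub_eq_zero] at this
end

section
/- Let R be a commutative semi-local Noetherian ring (finitely many maximal ideals) and M an arbitrary R-module. If the canonical map M → ∏_{m maximal} M_m is injective, then the natural map M → lim_{p ∈ Spec R} M_p is an isomorphism. -/
open LocalizedModule

variable {R : Type*} [CommRing R]

lemma smul_sigma_eq (M : Type*) [AddCommGroup M] [Module R M]
    {σ : ∀ p : PrimeSpectrum R, LocalizedModule p.asIdeal.primeCompl M}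
    (hσ : IsCompatible M σ) {p q : PrimeSpectrum R} (h : q.asIdeal ≤ p.asIdeal)
    {x : M} {s : p.asIdeal.primeCompl} (hx : σ p = LocalizedModule.mk x s) :
    (s : R) • σ q = LocalizedModule.mk x 1 := by
  have h1 : (s : R) • σ p = mkLinearMap p.asIdeal.primeCompl M x := by
    rw [hx, LocalizedModule.smul'_mk, LocalizedModule.mkLinearMap_apply, LocalizedModule.mk_eq]
    exact ⟨1, by simp [Submonoid.smul_def]⟩
  calc (s : R) • σ q = specMap M p q h ((s : R) • σ p) := by
        rw [map_smul, hσ p q h]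
    _ = specMap M p q h (mkLinearMap p.asIdeal.primeCompl M x) := by rw [h1]
    _ = mkLinearMap q.asIdeal.primeCompl M x := specMap_mk M p q h x
    _ = LocalizedModule.mk x 1 := LocalizedModule.mkLinearMap_apply _ _ _

lemma pair_glue (M : Type*) [AddCommGroup M] [Module R M]
    {σ : ∀ p : PrimeSpectrum R, LocalizedModule p.asIdeal.primeCompl M}
    (hσ : IsCompatible M σ) (pI pJ : PrimeSpectrum R)
    {xI xJ : M} {sI : pI.asIdeal.primeCompl} {sJ : pJ.asIdeal.primeCompl}
    (hI : σ pI = LocalizedModule.mk xI sI) (hJ : σ pJ = LocalizedModule.mk xJ sJ) :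
    ∃ a ∈ pI.asIdeal.primeCompl, ∃ b ∈ pJ.asIdeal.primeCompl,
      (a * b) • ((sJ : R) • xI - (sI : R) • xJ) = 0 := by
  set z : M := (sJ : R) • xI - (sI : R) • xJ with hz
  set A : Ideal R := LinearMap.ker (LinearMap.toSpanSingleton R M z) with hA
  set S : Submonoid R := pI.asIdeal.primeCompl ⊔ pJ.asIdeal.primeCompl with hS
  by_cases hdisj : Disjoint (A : Set R) (S : Set R)
  · exfalso
    obtain ⟨P, hP, hAP, hPS⟩ := Ideal.exists_le_prime_disjoint A S hdisj
    have hPI : P ≤ pI.asIdeal := by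
      intro r hr
      by_contra hrI
      exact Set.disjoint_left.mp hPS hr ((le_sup_left :
        pI.asIdeal.primeCompl ≤ S) hrI)
    have hPJ : P ≤ pJ.asIdeal := by
      intro r hr
      by_contra hrJ
      exact Set.disjoint_left.mp hPS hr ((le_sup_right :
        pJ.asIdeal.primeCompl ≤ S) hrJ)
    set p' : PrimeSpectrum R := ⟨P, hP⟩ with hp'
    have e1 : (sI : R) • σ p' = LocalizedModule.mk xI 1 := smul_sigma_eq M hσ hPI hI
    have e2 : (sJ : R) • σ p' = LocalizedModule.mk xJ 1 := smul_sigma_eq M hσ hPJ hJ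
    have e3 : (LocalizedModule.mk ((sJ : R) • xI) (1 : P.primeCompl) :
        LocalizedModule p'.asIdeal.primeCompl M)
        = LocalizedModule.mk ((sI : R) • xJ) (1 : P.primeCompl) := by
      calc (LocalizedModule.mk ((sJ : R) • xI) (1 : P.primeCompl) :
            LocalizedModule p'.asIdeal.primeCompl M)
          = (sJ : R) • LocalizedModule.mk xI 1 := by rw [LocalizedModule.smul'_mk]
        _ = (sJ : R) • ((sI : R) • σ p') := by rw [e1]
        _ = (sI : R) • ((sJ : R) • σ p') := smul_comm _ _ _
        _ = (sI : R) • LocalizedModule.mk xJ 1 := by rw [e2]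
        _ = LocalizedModule.mk ((sI : R) • xJ) 1 := by rw [LocalizedModule.smul'_mk]
    rw [LocalizedModule.mk_eq] at e3
    obtain ⟨u, hu⟩ := e3
    have huz : (u : R) • z = 0 := by
      rw [hz, smul_sub, sub_eq_zero]
      simpa only [one_smul, Submonoid.smul_def] using hu
    have : (u : R) ∈ A := huz
    exact u.2 (hAP this)
  · obtain ⟨u, huA, huS⟩ := Set.not_disjoint_iff.mp hdisj
    obtain ⟨a, haI, b, hbJ, hab⟩ := Submonoid.mem_sup.mp huS
    refine ⟨a, haI, b, hbJ, ?_⟩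
    have : u • z = 0 := huA
    rw [hab]
    exact this

/-- For a semi-local Noetherian ring `R` (finitely many maximal ideals) and any
`R`-module `M`, if `M` embeds into the product of its localizations at the maximal
ideals, then the natural map `M → lim_{p ∈ Spec R} M_p` is an isomorphism. -/
theorem bijective_of_semilocal [IsNoetherianRing R]
    (hsemi : {I : Ideal R | I.IsMaximal}.Finite)
    (M : Type*) [AddCommGroup M] [Module R M]
    (hinj : Function.Injective
      (fun (m : M) (I : MaximalSpectrum R) => mkLinearMap I.asIdeal.primeCompl M m)) :
    Function.Bijective (toCompatibleFamilies (R := R) M) := by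
  constructor
  · -- injectivity
    intro m1 m2 h12
    apply hinj
    funext I
    exact congrArg (fun σ : compatibleFamilies (R := R) M =>
      (σ : ∀ p : PrimeSpectrum R, LocalizedModule p.asIdeal.primeCompl M)
        I.toPrimeSpectrum) h12
  · -- surjectivity
    rintro ⟨σ, hσ⟩
    have hσ' : IsCompatible M σ := hσ
    haveI : Finite (MaximalSpectrum R) := by
      haveI : Finite {I : Ideal R // I.IsMaximal} := hsemi.to_subtype
      exact Finite.of_equiv {I : Ideal R // I.IsMaximal}
        ⟨fun I => ⟨I.1, I.2⟩, fun K => ⟨K.asIdeal, K.isMaximal⟩,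
          fun _ => rfl, fun _ => rfl⟩
    haveI : Fintype (MaximalSpectrum R) := Fintype.ofFinite _
    -- choose fraction representations at the maximal ideals
    have hrep : ∀ K : MaximalSpectrum R,
        ∃ (x : M) (s : K.toPrimeSpectrum.asIdeal.primeCompl),
          σ K.toPrimeSpectrum = LocalizedModule.mk x s := fun K =>
      LocalizedModule.induction_on (fun x s => ⟨x, s, rfl⟩) (σ K.toPrimeSpectrum)
    choose x s hxs using hrep
    -- pairwise gluing data
    have hpair : ∀ I J : MaximalSpectrum R,
        ∃ a ∈ I.toPrimeSpectrum.asIdeal.primeCompl,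
          ∃ b ∈ J.toPrimeSpectrum.asIdeal.primeCompl,
            (a * b) • ((s J : R) • x I - (s I : R) • x J) = 0 := fun I J =>
      pair_glue M hσ' I.toPrimeSpectrum J.toPrimeSpectrum (hxs I) (hxs J)
    choose a ha b hb hab using hpair
    -- normalize the representations
    set c : MaximalSpectrum R → R := fun I => ∏ J : MaximalSpectrum R, a I J * b J I with hcdef
    have hc : ∀ I, c I ∈ I.toPrimeSpectrum.asIdeal.primeCompl := fun I =>
      Submonoid.prod_mem _ fun J _ => Submonoid.mul_mem _ (ha I J) (hb J I)
    set X : MaximalSpectrum R → M := fun I => c I • x I with hXdef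
    set Sd : MaximalSpectrum R → R := fun I => c I * (s I : R) with hSddef
    have hSd : ∀ I, Sd I ∈ I.toPrimeSpectrum.asIdeal.primeCompl := fun I =>
      Submonoid.mul_mem _ (hc I) (s I).2
    have key : ∀ I J : MaximalSpectrum R, Sd J • X I = Sd I • X J := by
      intro I J
      have hdvd : (a I J * b I J) ∣ c I * c J :=
        mul_dvd_mul
          (dvd_trans (dvd_mul_right _ _)
            (Finset.dvd_prod_of_mem (fun K => a I K * b K I) (Finset.mem_univ J)))
          (dvd_trans (dvd_mul_left _ _)
            (Finset.dvd_prod_of_mem (fun K => a J K * b K J) (Finset.mem_univ I)))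
      obtain ⟨k, hk⟩ := hdvd
      have h0 : (c I * c J) • ((s J : R) • x I - (s I : R) • x J) = 0 := by
        rw [hk, mul_comm, mul_smul, hab I J, smul_zero]
      rw [smul_sub, sub_eq_zero] at h0
      calc Sd J • X I = (c I * c J) • ((s J : R) • x I) := by
            rw [smul_smul, smul_smul]; congr 1; ring
        _ = (c I * c J) • ((s I : R) • x J) := h0
        _ = Sd I • X J := by rw [smul_smul, smul_smul]; congr 1; ring
    -- the ideal of "uniform denominators"
    set A : Ideal R :=
      { carrier := {r : R | ∃ m : M, ∀ I : MaximalSpectrum R, r • X I = Sd I • m}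
        add_mem' := by
          rintro r r' ⟨m1, h1⟩ ⟨m2, h2⟩
          exact ⟨m1 + m2, fun I => by rw [add_smul, smul_add, h1 I, h2 I]⟩
        zero_mem' := ⟨0, fun I => by rw [zero_smul, smul_zero]⟩
        smul_mem' := by
          rintro t r ⟨m1, h1⟩
          exact ⟨t • m1, fun I => by
            rw [smul_eq_mul, mul_smul, h1 I, smul_comm]⟩ } with hAdef
    have hSdA : ∀ J : MaximalSpectrum R, Sd J ∈ A := fun J =>
      ⟨X J, fun I => key I J⟩
    have h1A : (1 : R) ∈ A := by
      by_contra h1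
      have hne : A ≠ ⊤ := fun ht => h1 (ht ▸ Submodule.mem_top)
      obtain ⟨Mx, hMx, hAM⟩ := Ideal.exists_le_maximal A hne
      exact hSd ⟨Mx, hMx⟩ (hAM (hSdA ⟨Mx, hMx⟩))
    obtain ⟨m, hm⟩ := h1A
    have hm' : ∀ I : MaximalSpectrum R, X I = Sd I • m := fun I => by
      have := hm I; rwa [one_smul] at this
    -- m is the required global element
    refine ⟨m, Subtype.ext (funext fun p => ?_)⟩
    have hpt : p.asIdeal ≠ ⊤ := p.isPrime.ne_top
    obtain ⟨Mx, hMx, hle⟩ := Ideal.exists_le_maximal _ hpt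
    set K : MaximalSpectrum R := ⟨Mx, hMx⟩ with hK
    have hle' : p.asIdeal ≤ K.toPrimeSpectrum.asIdeal := hle
    have h1 : (s K : R) • σ p = LocalizedModule.mk (x K) 1 :=
      smul_sigma_eq M hσ' hle' (hxs K)
    have hSdp : Sd K ∈ p.asIdeal.primeCompl := fun h => hSd K (hle' h)
    have h2 : Sd K • σ p = Sd K • (LocalizedModule.mk m (1 : p.asIdeal.primeCompl)) := by
      calc Sd K • σ p = c K • ((s K : R) • σ p) := by rw [smul_smul]
        _ = c K • (LocalizedModule.mk (x K) 1) := by rw [h1]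
        _ = LocalizedModule.mk (X K) 1 := by rw [LocalizedModule.smul'_mk]
        _ = LocalizedModule.mk (Sd K • m) 1 := by rw [hm' K]
        _ = Sd K • LocalizedModule.mk m 1 := by rw [LocalizedModule.smul'_mk]
    have hu : IsUnit ((algebraMap R
        (Module.End R (LocalizedModule p.asIdeal.primeCompl M))) (Sd K)) :=
      IsLocalizedModule.map_units (mkLinearMap p.asIdeal.primeCompl M) ⟨Sd K, hSdp⟩
    have hcancel := ((Module.End.isUnit_iff _).mp hu).injective
    show mkLinearMap p.asIdeal.primeCompl M m = σ p
    rw [LocalizedModule.mkLinearMap_apply]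
    apply hcancel
    simp only [Module.algebraMap_end_apply]
    exact h2.symm
end

section
/- Let R be a commutative Noetherian ring and M a finitely generated R-module. If σ, σ' ∈ lim_{p ∈ Spec R} M_p are two compatible families whose components agree at every associated prime of M, then σ = σ'. -/
open LocalizedModule

variable {R : Type*} [CommRing R]

lemma smul_injective_of_mem_primeCompl {M : Type*} [AddCommGroup M] [Module R M]
    (p : PrimeSpectrum R) (t : p.asIdeal.primeCompl)
    (x : LocalizedModule p.asIdeal.primeCompl M) (hx : (t : R) • x = 0) : x = 0 := by
  have hu := IsLocalizedModule.map_units (mkLinearMap p.asIdeal.primeCompl M) t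
  have := ((Module.End.isUnit_iff _).mp hu).injective
  apply this
  simpa [Module.algebraMap_end_apply] using hx

lemma specMap_eq_zero {M : Type*} [AddCommGroup M] [Module R M]
    (p q : PrimeSpectrum R) (h : q.asIdeal ≤ p.asIdeal)
    (x : LocalizedModule p.asIdeal.primeCompl M) (hx : specMap M p q h x = 0) :
    ∃ t : q.asIdeal.primeCompl, (t : R) • x = 0 := by
  induction x using LocalizedModule.induction_on with
  | _ m s =>
    have h1 : specMap M p q h (LocalizedModule.mk ((s : R) • m) s) = 0 := by
      rw [← smul'_mk, map_smul, hx, smul_zero]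
    rw [show (LocalizedModule.mk ((s : R) • m) s : LocalizedModule p.asIdeal.primeCompl M)
        = LocalizedModule.mk m 1 from mk_cancel s m] at h1
    have h2 : mkLinearMap q.asIdeal.primeCompl M m = 0 := by
      rw [← specMap_mk M p q h m]
      exact h1
    obtain ⟨t, ht⟩ := (IsLocalizedModule.eq_zero_iff q.asIdeal.primeCompl
      (mkLinearMap q.asIdeal.primeCompl M)).mp h2
    refine ⟨t * ⟨(s : R), fun hs => s.2 (h hs)⟩, ?_⟩
    rw [smul'_mk]
    have : ((t * ⟨(s : R), fun hs => s.2 (h hs)⟩ : q.asIdeal.primeCompl) : R) • m = 0 := by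
      show ((t : R) * (s : R)) • m = 0
      rw [mul_comm, mul_smul, show (t : R) • m = 0 from ht, smul_zero]
    rw [this, zero_mk]

lemma isAssociatedPrime_of_localized [IsNoetherianRing R]
    {M : Type*} [AddCommGroup M] [Module R M] (p : PrimeSpectrum R) {P : Ideal R}
    (hP : IsAssociatedPrime P (LocalizedModule p.asIdeal.primeCompl M))
    (hle : P ≤ p.asIdeal) : P ∈ associatedPrimes R M := by
  classical
  obtain ⟨hprime, y, hy⟩ := isAssociatedPrime_iff.mp hP
  induction y using LocalizedModule.induction_on with
  | _ m s =>
    -- membership criterion for P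
    have hmem : ∀ r : R, r ∈ P ↔ ∃ t : p.asIdeal.primeCompl, (t : R) • (r • m) = 0 := by
      intro r
      rw [hy, Submodule.mem_colon_singleton, Submodule.mem_bot, smul'_mk]
      constructor
      · intro hr
        have : mkLinearMap p.asIdeal.primeCompl M (r • m) = 0 := by
          have : LocalizedModule.mk (r • m) (1 : p.asIdeal.primeCompl) =
              (s : R) • LocalizedModule.mk (r • m) s := by
            rw [smul'_mk, show (LocalizedModule.mk ((s : R) • (r • m)) s :
              LocalizedModule p.asIdeal.primeCompl M)
                = LocalizedModule.mk (r • m) 1 from mk_cancel s (r • m)]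
          show LocalizedModule.mk (r • m) 1 = 0
          rw [this, hr, smul_zero]
        exact (IsLocalizedModule.eq_zero_iff p.asIdeal.primeCompl
          (mkLinearMap p.asIdeal.primeCompl M)).mp this
      · rintro ⟨t, ht⟩
        apply smul_injective_of_mem_primeCompl p t
        rw [smul'_mk, ht, zero_mk]
    -- choose generators of P
    obtain ⟨T, hT⟩ : P.FG := IsNoetherian.noetherian P
    choose tfun htfun using fun (r : T) => (hmem r).mp (hT ▸ Submodule.subset_span r.2)
    set t : p.asIdeal.primeCompl := ∏ r ∈ T.attach, tfun r with hdef
    refine isAssociatedPrime_iff.mpr ⟨hprime, (t : R) • m, ?_⟩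
    apply le_antisymm
    · -- P ≤ annihilator : enough on generators
      rw [← hT, Ideal.span_le]
      intro r hr
      rw [SetLike.mem_coe, Submodule.mem_colon_singleton, Submodule.mem_bot]
      have hsplit : t = tfun ⟨r, hr⟩ * ∏ x ∈ T.attach.erase ⟨r, hr⟩, tfun x :=
        (Finset.mul_prod_erase T.attach tfun (Finset.mem_attach T ⟨r, hr⟩)).symm
      rw [smul_comm, hsplit, Submonoid.coe_mul, mul_comm, mul_smul, htfun ⟨r, hr⟩, smul_zero]
    · intro r hr
      rw [Submodule.mem_colon_singleton, Submodule.mem_bot] at hr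
      have hrt : r * (t : R) ∈ P := by
        rw [hmem]
        exact ⟨1, by simp [mul_smul, hr]⟩
      have htP : (t : R) ∉ P := fun hc => t.2 (hle hc)
      rcases hprime.mem_or_mem hrt with h1 | h1
      · exact h1
      · exact absurd h1 htP

/-- Two compatible families in `lim_{p ∈ Spec R} M_p` that agree at every associated
prime of `M` are equal. -/
theorem compatible_family_eq_of_eq_at_associated_primes [IsNoetherianRing R]
    (M : Type*) [AddCommGroup M] [Module R M] [Module.Finite R M]
    (σ σ' : ∀ p : PrimeSpectrum R, LocalizedModule p.asIdeal.primeCompl M)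
    (hσ : IsCompatible M σ) (hσ' : IsCompatible M σ')
    (h : ∀ p : PrimeSpectrum R, p.asIdeal ∈ associatedPrimes R M → σ p = σ' p) :
    σ = σ' := by
  funext p
  by_contra hne
  have hx0 : σ p - σ' p ≠ 0 := sub_ne_zero_of_ne hne
  obtain ⟨P, hP, hann⟩ :=
    exists_le_isAssociatedPrime_of_isNoetherianRing R (σ p - σ' p) hx0
  have hle : P ≤ p.asIdeal := by
    intro r hr
    by_contra hrp
    obtain ⟨hprime, y, hy⟩ := isAssociatedPrime_iff.mp hP
    have hry : r • y = 0 := by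
      rw [hy, Submodule.mem_colon_singleton, Submodule.mem_bot] at hr
      exact hr
    have hy0 : y = 0 := smul_injective_of_mem_primeCompl p ⟨r, hrp⟩ y hry
    apply hprime.ne_top
    rw [hy, hy0]
    ext x
    simp [Submodule.mem_colon_singleton]
  set q : PrimeSpectrum R := ⟨P, hP.1⟩ with hq
  have hassM : P ∈ associatedPrimes R M := isAssociatedPrime_of_localized p hP hle
  have heq : σ q = σ' q := h q hassM
  have hzero : specMap M p q hle (σ p - σ' p) = 0 := by
    rw [map_sub, hσ p q hle, hσ' p q hle, heq, sub_self]
  obtain ⟨t, ht⟩ := specMap_eq_zero p q hle _ hzero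
  have : (t : R) ∈ P := hann (Submodule.mem_colon_singleton.mpr ((Submodule.mem_bot R).mpr ht))
  exact t.2 this
end
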